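/- arXiv:2601.09477 — 2 statements merged into one kernel-verified Lean document; each statement's English description precedes it below -/
import Mathlib

section
/- Let n be a positive natural number and b = 2^m. Let A, B : Matrix (Fin n) (Fin n) ℝ with C = A * B. Let H1, H2 : Ω → (Fin n → Fin b) and S1, S2 : Ω → (Fin n → ({-1,1} : Set ℝ)) be mutually independent random functions, where each of H1, H2 is a pairwise independent uniform family into Fin b and each of S1, S2 is a pairwise independent uniform family of random signs. Define the random sketch P[k] = Σ_{(i',j') : H1(i') XOR H2(j') = k} S1(i')·S2(j')·C[i'][j'] and the estimator X̃(i,j) = S1(i)·S2(j)·P[H1(i) XOR H2(j)]. Then for every (i, j), Var(X̃(i,j)) ≤ ‖C‖_F² / b, where ‖C‖_F² = Σ_{i,j} C[i][j]² is the squared Frobenius norm of C. (This is the FWHT analogue of Theorem 3.1 of Pagh's compressed matrix multiplication.) -/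
open MeasureTheory
open scoped ENNReal ProbabilityTheory

/-- Bitwise XOR on `Fin (2^m)`. -/
def fxor {m : ℕ} (i j : Fin (2^m)) : Fin (2^m) :=
  ⟨i.val ^^^ j.val, Nat.xor_lt_two_pow i.isLt j.isLt⟩

/-- The FWHT compressed-product sketch of a matrix `C` under hash functions
`h1, h2` and sign functions `s1, s2`:
`p[k] = Σ_{h1(i') ⊕ h2(j') = k} s1(i')·s2(j')·C[i'][j']`. -/
def sketch {n m : ℕ} (C : Matrix (Fin n) (Fin n) ℝ)
    (h1 h2 : Fin n → Fin (2^m)) (s1 s2 : Fin n → ℝ) : Fin (2^m) → ℝ :=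
  fun k => ∑ p ∈ Finset.univ.filter
      (fun p : Fin n × Fin n => fxor (h1 p.1) (h2 p.2) = k),
    s1 p.1 * s2 p.2 * C p.1 p.2

/-- The decompressed estimate of entry `(i,j)`:
`s1(i)·s2(j)·p[h1(i) ⊕ h2(j)]`. -/
def estimate {n m : ℕ} (C : Matrix (Fin n) (Fin n) ℝ)
    (h1 h2 : Fin n → Fin (2^m)) (s1 s2 : Fin n → ℝ) (i j : Fin n) : ℝ :=
  s1 i * s2 j * sketch C h1 h2 s1 s2 (fxor (h1 i) (h2 j))

/-!
Write `δ_p` for the indicator that `h1(p.1) ⊕ h2(p.2) = h1(i) ⊕ h2(j)`; then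
`X̃(i,j) = Σ_p δ_p · (s1(i) s1(p.1)) · (s2(j) s2(p.2)) · C p`. Pairwise independent uniform signs
satisfy `E[s(a) s(a')] = [a = a']`, and the signs are independent of the hashes, so
`E X̃ = C i j` and `E X̃² = Σ_p P(δ_p = 1) · (C p)²`. For `p ≠ (i,j)` one of the two XOR
differences `h1(p.1) ⊕ h1(i)`, `h2(p.2) ⊕ h2(j)` is uniform (pairwise independence) and independent
of the other, so `P(δ_p = 1) = 1/b` and `Var X̃ = Σ_{p ≠ (i,j)} (C p)² / b`.
All random objects take finitely many values (signs are encoded as `Bool`), so every expectation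
is a finite sum against the joint point masses, which factor by independence.
-/

section Xor

variable {m : ℕ}

lemma fxor_eq_fxor_iff_right {a b c d : Fin (2^m)} :
    fxor a b = fxor c d ↔ d = fxor b (fxor a c) := by
  simp only [Fin.ext_iff, fxor]
  grind

lemma fxor_eq_fxor_iff_left {a b c d : Fin (2^m)} :
    fxor a b = fxor c d ↔ c = fxor a (fxor b d) := by
  simp only [Fin.ext_iff, fxor]
  grind

end Xor

/-- Linearity of expectation together with independence of the three coordinates under a
product weight. -/
lemma sum_prod_mul_sum_eq {A B D P : Type*} [Fintype A] [Fintype B] [Fintype D] [Fintype P]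
    (μ : A → ℝ) (ν : B → ℝ) (ρ : D → ℝ) (a : P → A → ℝ) (b : P → B → ℝ) (d : P → D → ℝ)
    (r : P → ℝ) :
    ∑ k : A × B × D, μ k.1 * ν k.2.1 * ρ k.2.2 * ∑ p, a p k.1 * b p k.2.1 * d p k.2.2 * r p
      = ∑ p, (∑ x, μ x * a p x) * (∑ y, ν y * b p y) * (∑ z, ρ z * d p z) * r p := by
  conv_lhs => simp only [Finset.mul_sum]
  rw [Finset.sum_comm]
  congr! 1 with p
  calc ∑ k : A × B × D, μ k.1 * ν k.2.1 * ρ k.2.2 * (a p k.1 * b p k.2.1 * d p k.2.2 * r p)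
      = (∑ k : A × B × D, μ k.1 * a p k.1 * (ν k.2.1 * b p k.2.1 * (ρ k.2.2 * d p k.2.2)))
          * r p := by
        rw [Finset.sum_mul]; congr! 1; ring
    _ = (∑ x, μ x * a p x) * ((∑ y, ν y * b p y) * (∑ z, ρ z * d p z)) * r p := by
        rw [Fintype.sum_mul_sum, Fintype.sum_mul_sum]
        simp only [Fintype.sum_prod_type, Finset.mul_sum]
    _ = _ := by ring

lemma sum_ite_mul_sub_le {P : Type*} [Fintype P] [DecidableEq P] {b : ℝ} (hb : 0 < b)
    {c : P → ℝ} (hc : ∀ p, 0 ≤ c p) (q : P) :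
    ∑ p, (if p = q then 1 else 1 / b) * c p - c q ≤ (∑ p, c p) / b := by
  rw [← Finset.add_sum_erase _ _ (Finset.mem_univ q),
    ← Finset.add_sum_erase _ _ (Finset.mem_univ q), if_pos rfl, add_div]
  have hrest : ∑ p ∈ Finset.univ.erase q, (if p = q then 1 else 1 / b) * c p
      = (∑ p ∈ Finset.univ.erase q, c p) / b := by
    rw [Finset.sum_div]
    exact Finset.sum_congr rfl fun p hp => by rw [if_neg (Finset.ne_of_mem_erase hp)]; ring
  have := div_nonneg (hc q) hb.le
  linarith

section PairwiseUniform

variable {ι β : Type*} [Fintype ι] [DecidableEq ι] [Fintype β] [DecidableEq β]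

/-- `ν f` plays the role of the probability that a random function `ι → β` equals `f`. -/
structure IsPairwiseUniform (ν : (ι → β) → ℝ) : Prop where
  sum_eq_one : ∑ f, ν f = 1
  sum_filter_eq : ∀ a a', a ≠ a' → ∀ u v,
    ∑ f with f a = u ∧ f a' = v, ν f = 1 / (Fintype.card β : ℝ) ^ 2

namespace IsPairwiseUniform

variable {ν : (ι → β) → ℝ}

theorem sum_mul_apply_apply (hν : IsPairwiseUniform ν) {a a' : ι} (h : a ≠ a')
    (F : β → β → ℝ) :
    ∑ f, ν f * F (f a) (f a') = (∑ u, ∑ v, F u v) / Fintype.card β ^ 2 := by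
  rw [← Finset.sum_fiberwise Finset.univ (fun f => (f a, f a')), Fintype.sum_prod_type,
    Finset.sum_div]
  refine Finset.sum_congr rfl fun u _ => ?_
  rw [Finset.sum_div]
  refine Finset.sum_congr rfl fun v _ => ?_
  calc ∑ f with (f a, f a') = (u, v), ν f * F (f a) (f a')
      = ∑ f with f a = u ∧ f a' = v, ν f * F u v :=
        Finset.sum_congr (by simp only [Prod.mk.injEq]) fun f hf => by
          obtain ⟨rfl, rfl⟩ := (Finset.mem_filter.mp hf).2; rfl
    _ = F u v / Fintype.card β ^ 2 := by
        rw [← Finset.sum_mul, hν.sum_filter_eq a a' h u v]; ring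

theorem sum_mul_ite_eq (hν : IsPairwiseUniform ν) {a a' : ι} (h : a ≠ a') (φ : β → β) :
    ∑ f, ν f * (if f a' = φ (f a) then 1 else 0) = 1 / Fintype.card β := by
  rw [hν.sum_mul_apply_apply h fun u v => if v = φ u then 1 else 0]
  obtain ⟨f, -, -⟩ :=
    Finset.exists_ne_zero_of_sum_ne_zero (hν.sum_eq_one.trans_ne one_ne_zero)
  have : Nonempty β := ⟨f a⟩
  simp [sq, Finset.sum_ite_eq']

theorem sum_mul_mul_eq_ite (hν : IsPairwiseUniform ν) (σ : β → ℝ) (hσ : ∑ u, σ u = 0)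
    (hσσ : ∀ u, σ u * σ u = 1) (a a' : ι) :
    ∑ f, ν f * (σ (f a) * σ (f a')) = if a = a' then 1 else 0 := by
  split_ifs with h
  · simp [h, hσσ, hν.sum_eq_one]
  · rw [hν.sum_mul_apply_apply h fun u v => σ u * σ v]
    simp [← Finset.mul_sum, hσ]

end IsPairwiseUniform

theorem sum_mul_mul_ite_fxor_eq {m : ℕ} {ν₁ ν₂ : (ι → Fin (2^m)) → ℝ}
    (h₁ : IsPairwiseUniform ν₁) (h₂ : IsPairwiseUniform ν₂) (p : ι × ι) (i j : ι) :
    ∑ x : (ι → Fin (2^m)) × (ι → Fin (2^m)), ν₁ x.1 * ν₂ x.2 *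
        (if fxor (x.1 p.1) (x.2 p.2) = fxor (x.1 i) (x.2 j) then 1 else 0)
      = if p = (i, j) then 1 else 1 / 2 ^ m := by
  rw [Fintype.sum_prod_type]
  split_ifs with hpq
  · simp [hpq, ← Finset.mul_sum, h₁.sum_eq_one, h₂.sum_eq_one]
  -- Fix the hash table in which `p` and `(i, j)` share a coordinate; in the other one the two
  -- distinct coordinates then have to differ by a prescribed XOR, which has probability `1/2^m`.
  by_cases h : p.2 = j
  · have h' : p.1 ≠ i := fun h' => hpq (Prod.ext h' h)
    rw [Finset.sum_comm]
    calc ∑ f₂, ∑ f₁, ν₁ f₁ * ν₂ f₂ *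
          (if fxor (f₁ p.1) (f₂ p.2) = fxor (f₁ i) (f₂ j) then 1 else 0)
        = ∑ f₂, ν₂ f₂ * ∑ f₁, ν₁ f₁ *
          (if f₁ i = fxor (f₁ p.1) (fxor (f₂ p.2) (f₂ j)) then 1 else 0) := by
          simp only [fxor_eq_fxor_iff_left, Finset.mul_sum]
          exact Finset.sum_congr rfl fun _ _ => Finset.sum_congr rfl fun _ _ => by ring
      _ = ∑ f₂, ν₂ f₂ * (1 / 2 ^ m) := Finset.sum_congr rfl fun f₂ _ => by
          rw [h₁.sum_mul_ite_eq h' fun u => fxor u (fxor (f₂ p.2) (f₂ j))]; simp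
      _ = 1 / 2 ^ m := by rw [← Finset.sum_mul, h₂.sum_eq_one, one_mul]
  · calc ∑ f₁, ∑ f₂, ν₁ f₁ * ν₂ f₂ *
          (if fxor (f₁ p.1) (f₂ p.2) = fxor (f₁ i) (f₂ j) then 1 else 0)
        = ∑ f₁, ν₁ f₁ * ∑ f₂, ν₂ f₂ *
          (if f₂ j = fxor (f₂ p.2) (fxor (f₁ p.1) (f₁ i)) then 1 else 0) := by
          simp only [fxor_eq_fxor_iff_right, Finset.mul_sum]
          exact Finset.sum_congr rfl fun _ _ => Finset.sum_congr rfl fun _ _ => by ring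
      _ = ∑ f₁, ν₁ f₁ * (1 / 2 ^ m) := Finset.sum_congr rfl fun f₁ _ => by
          rw [h₂.sum_mul_ite_eq h fun u => fxor u (fxor (f₁ p.1) (f₁ i))]; simp
      _ = 1 / 2 ^ m := by rw [← Finset.sum_mul, h₁.sum_eq_one, one_mul]

end PairwiseUniform

def boolSign (b : Bool) : ℝ := if b then 1 else -1

lemma sum_boolSign : ∑ b, boolSign b = 0 := by simp [boolSign]

lemma boolSign_mul_self (b : Bool) : boolSign b * boolSign b = 1 := by
  cases b <;> simp [boolSign]

lemma boolSign_mem (c : Bool) : boolSign c ∈ ({-1, 1} : Set ℝ) := by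
  cases c <;> simp [boolSign]

/-- The values of the two hash functions and the two sign vectors (as bits). -/
abbrev SketchRandomness (n m : ℕ) : Type :=
  ((Fin n → Fin (2^m)) × (Fin n → Fin (2^m))) × (Fin n → Bool) × (Fin n → Bool)

section Estimator

variable {n m : ℕ} (C : Matrix (Fin n) (Fin n) ℝ) (i j : Fin n)

lemma estimate_eq_sum (h₁ h₂ : Fin n → Fin (2^m)) (s₁ s₂ : Fin n → ℝ) :
    estimate C h₁ h₂ s₁ s₂ i j = ∑ p : Fin n × Fin n,
      (if fxor (h₁ p.1) (h₂ p.2) = fxor (h₁ i) (h₂ j) then 1 else 0) *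
        (s₁ i * s₁ p.1) * (s₂ j * s₂ p.2) * C p.1 p.2 := by
  rw [estimate, sketch, Finset.sum_filter, Finset.mul_sum]
  congr! 1 with p
  split_ifs <;> ring

lemma estimate_sq_eq_sum (h₁ h₂ : Fin n → Fin (2^m)) {s₁ s₂ : Fin n → ℝ}
    (hs₁ : s₁ i * s₁ i = 1) (hs₂ : s₂ j * s₂ j = 1) :
    estimate C h₁ h₂ s₁ s₂ i j ^ 2 = ∑ pq : (Fin n × Fin n) × (Fin n × Fin n),
      ((if fxor (h₁ pq.1.1) (h₂ pq.1.2) = fxor (h₁ i) (h₂ j) then 1 else 0) *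
        (if fxor (h₁ pq.2.1) (h₂ pq.2.2) = fxor (h₁ i) (h₂ j) then 1 else 0)) *
        (s₁ pq.1.1 * s₁ pq.2.1) * (s₂ pq.1.2 * s₂ pq.2.2) *
        (C pq.1.1 pq.1.2 * C pq.2.1 pq.2.2) := by
  rw [estimate_eq_sum, sq, Fintype.sum_mul_sum, ← Fintype.sum_prod_type']
  congr! 1 with pq
  linear_combination
    (if fxor (h₁ pq.1.1) (h₂ pq.1.2) = fxor (h₁ i) (h₂ j) then (1 : ℝ) else 0) *
      (if fxor (h₁ pq.2.1) (h₂ pq.2.2) = fxor (h₁ i) (h₂ j) then 1 else 0) *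
      (s₁ pq.1.1 * s₁ pq.2.1) * (s₂ pq.1.2 * s₂ pq.2.2) *
      (C pq.1.1 pq.1.2 * C pq.2.1 pq.2.2) * (s₂ j * s₂ j * hs₁ + hs₂)

variable {ν₁ ν₂ : (Fin n → Fin (2^m)) → ℝ} {ν₃ ν₄ : (Fin n → Bool) → ℝ}
  (h₁ : IsPairwiseUniform ν₁) (h₂ : IsPairwiseUniform ν₂)
  (h₃ : IsPairwiseUniform ν₃) (h₄ : IsPairwiseUniform ν₄)
include h₁ h₂ h₃ h₄

theorem sum_mul_estimate :
    ∑ k : SketchRandomness n m,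
      ν₁ k.1.1 * ν₂ k.1.2 * ν₃ k.2.1 * ν₄ k.2.2 *
        estimate C k.1.1 k.1.2 (boolSign ∘ k.2.1) (boolSign ∘ k.2.2) i j = C i j := by
  simp only [estimate_eq_sum, Function.comp_apply]
  rw [sum_prod_mul_sum_eq
    (fun x : (Fin n → Fin (2^m)) × (Fin n → Fin (2^m)) => ν₁ x.1 * ν₂ x.2) ν₃ ν₄
    (fun (p : Fin n × Fin n) x =>
      if fxor (x.1 p.1) (x.2 p.2) = fxor (x.1 i) (x.2 j) then 1 else 0)
    (fun (p : Fin n × Fin n) g => boolSign (g i) * boolSign (g p.1))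
    (fun (p : Fin n × Fin n) g => boolSign (g j) * boolSign (g p.2))
    (fun (p : Fin n × Fin n) => C p.1 p.2)]
  simp only [sum_mul_mul_ite_fxor_eq h₁ h₂,
    h₃.sum_mul_mul_eq_ite _ sum_boolSign boolSign_mul_self,
    h₄.sum_mul_mul_eq_ite _ sum_boolSign boolSign_mul_self]
  simp [Fintype.sum_prod_type]

theorem sum_mul_estimate_sq :
    ∑ k : SketchRandomness n m,
      ν₁ k.1.1 * ν₂ k.1.2 * ν₃ k.2.1 * ν₄ k.2.2 *
        estimate C k.1.1 k.1.2 (boolSign ∘ k.2.1) (boolSign ∘ k.2.2) i j ^ 2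
      = ∑ p : Fin n × Fin n, (if p = (i, j) then 1 else 1 / 2 ^ m) * C p.1 p.2 ^ 2 := by
  simp only [estimate_sq_eq_sum, Function.comp_apply, boolSign_mul_self]
  rw [sum_prod_mul_sum_eq
    (fun x : (Fin n → Fin (2^m)) × (Fin n → Fin (2^m)) => ν₁ x.1 * ν₂ x.2) ν₃ ν₄
    (fun (pq : (Fin n × Fin n) × (Fin n × Fin n)) x =>
      (if fxor (x.1 pq.1.1) (x.2 pq.1.2) = fxor (x.1 i) (x.2 j) then 1 else 0) *
        (if fxor (x.1 pq.2.1) (x.2 pq.2.2) = fxor (x.1 i) (x.2 j) then 1 else 0))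
    (fun (pq : (Fin n × Fin n) × (Fin n × Fin n)) g =>
      boolSign (g pq.1.1) * boolSign (g pq.2.1))
    (fun (pq : (Fin n × Fin n) × (Fin n × Fin n)) g =>
      boolSign (g pq.1.2) * boolSign (g pq.2.2))
    (fun (pq : (Fin n × Fin n) × (Fin n × Fin n)) => C pq.1.1 pq.1.2 * C pq.2.1 pq.2.2)]
  simp only [h₃.sum_mul_mul_eq_ite _ sum_boolSign boolSign_mul_self,
    h₄.sum_mul_mul_eq_ite _ sum_boolSign boolSign_mul_self]
  rw [Fintype.sum_prod_type]
  congr! 1 with p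
  rw [Finset.sum_eq_single p]
  · simp only [ite_zero_mul_ite_zero, and_self, mul_one, if_true,
      sum_mul_mul_ite_fxor_eq h₁ h₂]
    ring
  · intro q _ hqp
    obtain h | h : p.1 ≠ q.1 ∨ p.2 ≠ q.2 := by
      contrapose! hqp; exact Prod.ext hqp.1.symm hqp.2.symm
    all_goals simp [h]
  · simp

theorem sum_mul_estimate_sq_sub_sq_le :
    ∑ k : SketchRandomness n m,
      ν₁ k.1.1 * ν₂ k.1.2 * ν₃ k.2.1 * ν₄ k.2.2 *
        estimate C k.1.1 k.1.2 (boolSign ∘ k.2.1) (boolSign ∘ k.2.2) i j ^ 2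
      - (∑ k : SketchRandomness n m,
          ν₁ k.1.1 * ν₂ k.1.2 * ν₃ k.2.1 * ν₄ k.2.2 *
            estimate C k.1.1 k.1.2 (boolSign ∘ k.2.1) (boolSign ∘ k.2.2) i j) ^ 2
      ≤ (∑ i', ∑ j', C i' j' ^ 2) / 2 ^ m := by
  rw [sum_mul_estimate_sq C i j h₁ h₂ h₃ h₄, sum_mul_estimate C i j h₁ h₂ h₃ h₄,
    ← Fintype.sum_prod_type']
  exact sum_ite_mul_sub_le (by positivity) (fun p => sq_nonneg _) (i, j)

end Estimator

section Probability

open ProbabilityTheory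

variable {Ω : Type*} [MeasurableSpace Ω] {μ : Measure Ω} [IsProbabilityMeasure μ]

theorem variance_comp_eq_sum {K : Type*} [Fintype K] [MeasurableSpace K]
    [MeasurableSingletonClass K] {F : Ω → K} (hF : Measurable F) (ψ : K → ℝ) :
    Var[fun ω => ψ (F ω); μ]
      = ∑ k, μ.real (F ⁻¹' {k}) * ψ k ^ 2 - (∑ k, μ.real (F ⁻¹' {k}) * ψ k) ^ 2 := by
  have := Measure.isProbabilityMeasure_map (μ := μ) hF.aemeasurable
  rw [← Function.comp_def,
    ← variance_map (measurable_of_finite ψ).aemeasurable hF.aemeasurable,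
    variance_eq_sub MemLp.of_discrete, integral_fintype .of_finite, integral_fintype .of_finite]
  simp [map_measureReal_apply hF (measurableSet_singleton _)]

theorem isPairwiseUniform_measureReal_preimage {ι β : Type*} [Fintype ι] [DecidableEq ι]
    [Fintype β] [DecidableEq β] [MeasurableSpace β] [MeasurableSingletonClass β]
    {X : Ω → ι → β} (hX : Measurable X)
    (hunif : ∀ a u, μ {ω | X ω a = u} = 1 / Fintype.card β)
    (hpair : ∀ a a', a ≠ a' → ∀ u v,
      μ {ω | X ω a = u ∧ X ω a' = v} = μ {ω | X ω a = u} * μ {ω | X ω a' = v}) :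
    IsPairwiseUniform fun f => μ.real (X ⁻¹' {f}) where
  sum_eq_one := by
    rw [sum_measureReal_preimage_singleton _ fun f _ => hX (measurableSet_singleton f)]
    simp
  sum_filter_eq a a' h u v := by
    rw [sum_measureReal_preimage_singleton _ fun f _ => hX (measurableSet_singleton f)]
    simp only [Finset.coe_filter, Finset.mem_univ, true_and, Set.preimage_ofPred_eq]
    rw [measureReal_def, hpair a a' h, hunif, hunif]
    simp [sq]

end Probability

section Signs

variable {ι : Type*}

/-- Encodes a `±1`-valued vector by a vector of bits, so that random sign vectors take values
in a finite type. -/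
noncomputable def signBits (s : ι → ℝ) : ι → Bool := fun a => decide (s a = 1)

lemma signBits_apply_eq_iff {s : ι → ℝ} {a : ι} (ha : s a ∈ ({-1, 1} : Set ℝ)) {c : Bool} :
    signBits s a = c ↔ s a = boolSign c := by
  obtain h | h : s a = -1 ∨ s a = 1 := ha
  all_goals cases c <;> norm_num [signBits, boolSign, h]

lemma signBits_eq_iff {s : ι → ℝ} (hs : ∀ a, s a ∈ ({-1, 1} : Set ℝ)) {g : ι → Bool} :
    signBits s = g ↔ s = boolSign ∘ g := by
  simp only [funext_iff, Function.comp_apply, signBits_apply_eq_iff (hs _)]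

lemma boolSign_comp_signBits {s : ι → ℝ} (hs : ∀ a, s a ∈ ({-1, 1} : Set ℝ)) :
    boolSign ∘ signBits s = s :=
  ((signBits_eq_iff hs).mp rfl).symm

lemma measurable_signBits : Measurable (signBits : (ι → ℝ) → ι → Bool) :=
  measurable_pi_lambda _ fun a => measurable_to_bool <| by
    simpa [Set.preimage, signBits] using
      measurableSet_singleton (1 : ℝ) |>.preimage (measurable_pi_apply (X := fun _ : ι => ℝ) a)

lemma preimage_signBits_singleton {Ω : Type*} {S : Ω → ι → ℝ}
    (hval : ∀ ω a, S ω a ∈ ({-1, 1} : Set ℝ)) (g : ι → Bool) :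
    (fun ω => signBits (S ω)) ⁻¹' {g} = {ω | S ω = boolSign ∘ g} := by
  ext ω; exact signBits_eq_iff (hval ω)

theorem isPairwiseUniform_signBits [Fintype ι] [DecidableEq ι] {Ω : Type*} [MeasurableSpace Ω]
    {μ : Measure Ω} [IsProbabilityMeasure μ] {S : Ω → ι → ℝ} (hS : Measurable S)
    (hval : ∀ ω a, S ω a ∈ ({-1, 1} : Set ℝ))
    (hunif : ∀ a, ∀ u ∈ ({-1, 1} : Set ℝ), μ {ω | S ω a = u} = 1 / 2)
    (hpair : ∀ a a', a ≠ a' → ∀ u v : ℝ,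
      μ {ω | S ω a = u ∧ S ω a' = v} = μ {ω | S ω a = u} * μ {ω | S ω a' = v}) :
    IsPairwiseUniform fun g => μ.real ((fun ω => signBits (S ω)) ⁻¹' {g}) := by
  refine isPairwiseUniform_measureReal_preimage (measurable_signBits.comp hS)
    (fun a c => ?_) (fun a a' h c c' => ?_)
  all_goals simp only [signBits_apply_eq_iff (hval _ _)]
  · simp [hunif a _ (boolSign_mem c)]
  · exact hpair a a' h _ _

end Signs

theorem compressed_mm_fwht_variance_general
    {Ω : Type*} [MeasureSpace Ω] [IsProbabilityMeasure (ℙ : Measure Ω)]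
    (n m : ℕ)
    (C : Matrix (Fin n) (Fin n) ℝ)
    (H1 H2 : Ω → Fin n → Fin (2^m)) (S1 S2 : Ω → Fin n → ℝ)
    (hmH1 : Measurable H1) (hmH2 : Measurable H2)
    (hmS1 : Measurable S1) (hmS2 : Measurable S2)
    -- the four random functions are mutually independent:
    (hindep : ∀ (f1 f2 : Fin n → Fin (2^m)) (g1 g2 : Fin n → ℝ),
      ℙ {ω | H1 ω = f1 ∧ H2 ω = f2 ∧ S1 ω = g1 ∧ S2 ω = g2}
        = ℙ {ω | H1 ω = f1} * ℙ {ω | H2 ω = f2} * ℙ {ω | S1 ω = g1} * ℙ {ω | S2 ω = g2})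
    -- H1 and H2 are pairwise independent uniform families into Fin (2^m):
    (hH1unif : ∀ i u, ℙ {ω | H1 ω i = u} = 1 / (2^m : ℝ≥0∞))
    (hH1pair : ∀ i i', i ≠ i' → ∀ u v,
      ℙ {ω | H1 ω i = u ∧ H1 ω i' = v} = ℙ {ω | H1 ω i = u} * ℙ {ω | H1 ω i' = v})
    (hH2unif : ∀ j u, ℙ {ω | H2 ω j = u} = 1 / (2^m : ℝ≥0∞))
    (hH2pair : ∀ j j', j ≠ j' → ∀ u v,
      ℙ {ω | H2 ω j = u ∧ H2 ω j' = v} = ℙ {ω | H2 ω j = u} * ℙ {ω | H2 ω j' = v})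
    -- S1 and S2 are pairwise independent uniform families of random signs:
    (hS1val : ∀ ω i, S1 ω i ∈ ({-1, 1} : Set ℝ))
    (hS2val : ∀ ω j, S2 ω j ∈ ({-1, 1} : Set ℝ))
    (hS1unif : ∀ i, ∀ u ∈ ({-1, 1} : Set ℝ), ℙ {ω | S1 ω i = u} = 1 / 2)
    (hS1pair : ∀ i i', i ≠ i' → ∀ u v : ℝ,
      ℙ {ω | S1 ω i = u ∧ S1 ω i' = v} = ℙ {ω | S1 ω i = u} * ℙ {ω | S1 ω i' = v})
    (hS2unif : ∀ j, ∀ u ∈ ({-1, 1} : Set ℝ), ℙ {ω | S2 ω j = u} = 1 / 2)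
    (hS2pair : ∀ j j', j ≠ j' → ∀ u v : ℝ,
      ℙ {ω | S2 ω j = u ∧ S2 ω j' = v} = ℙ {ω | S2 ω j = u} * ℙ {ω | S2 ω j' = v})
    (i j : Fin n) :
    ProbabilityTheory.variance (fun ω => estimate C (H1 ω) (H2 ω) (S1 ω) (S2 ω) i j) ℙ
      ≤ (∑ i' : Fin n, ∑ j' : Fin n, (C i' j')^2) / (2^m : ℝ) := by
  set F := fun ω => ((H1 ω, H2 ω), signBits (S1 ω), signBits (S2 ω))
  have hF : Measurable F := (hmH1.prodMk hmH2).prodMk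
    ((measurable_signBits.comp hmS1).prodMk (measurable_signBits.comp hmS2))
  have hweight : ∀ k, volume.real (F ⁻¹' {k}) =
      volume.real (H1 ⁻¹' {k.1.1}) * volume.real (H2 ⁻¹' {k.1.2}) *
        volume.real ((fun ω => signBits (S1 ω)) ⁻¹' {k.2.1}) *
        volume.real ((fun ω => signBits (S2 ω)) ⁻¹' {k.2.2}) := by
    rintro ⟨⟨f₁, f₂⟩, g₁, g₂⟩
    have hset : F ⁻¹' {((f₁, f₂), g₁, g₂)} =
        {ω | H1 ω = f₁ ∧ H2 ω = f₂ ∧ S1 ω = boolSign ∘ g₁ ∧ S2 ω = boolSign ∘ g₂} := by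
      ext ω; simp [F, signBits_eq_iff (hS1val ω), signBits_eq_iff (hS2val ω), and_assoc]
    simp only [measureReal_def, hset, hindep, preimage_signBits_singleton hS1val,
      preimage_signBits_singleton hS2val, ENNReal.toReal_mul]
    rfl
  have hX : (fun ω => estimate C (H1 ω) (H2 ω) (S1 ω) (S2 ω) i j) = fun ω =>
      estimate C (F ω).1.1 (F ω).1.2 (boolSign ∘ (F ω).2.1) (boolSign ∘ (F ω).2.2) i j := by
    simp only [F, boolSign_comp_signBits (hS1val _), boolSign_comp_signBits (hS2val _)]
  rw [hX]
  refine (variance_comp_eq_sum hF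
    fun k => estimate C k.1.1 k.1.2 (boolSign ∘ k.2.1) (boolSign ∘ k.2.2) i j).trans_le ?_
  simp only [hweight]
  exact sum_mul_estimate_sq_sub_sq_le C i j
    (isPairwiseUniform_measureReal_preimage hmH1 (by simpa using hH1unif) hH1pair)
    (isPairwiseUniform_measureReal_preimage hmH2 (by simpa using hH2unif) hH2pair)
    (isPairwiseUniform_signBits hmS1 hS1val hS1unif hS1pair)
    (isPairwiseUniform_signBits hmS2 hS2val hS2unif hS2pair)

/-- The variance of the FWHT-based compressed matrix multiplication estimator is
bounded by the squared Frobenius norm of `C = A * B` divided by `b = 2^m`: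
`Var(X̃(i,j)) ≤ ‖C‖_F² / b`. (FWHT analogue of Theorem 3.1 of Pagh.) -/
theorem compressed_mm_fwht_variance
    {Ω : Type*} [MeasureSpace Ω] [IsProbabilityMeasure (ℙ : Measure Ω)]
    (n m : ℕ) (hn : 0 < n)
    (A B C : Matrix (Fin n) (Fin n) ℝ) (hC : C = A * B)
    (H1 H2 : Ω → Fin n → Fin (2^m)) (S1 S2 : Ω → Fin n → ℝ)
    (hmH1 : Measurable H1) (hmH2 : Measurable H2)
    (hmS1 : Measurable S1) (hmS2 : Measurable S2)
    -- the four random functions are mutually independent: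
    (hindep : ∀ (f1 f2 : Fin n → Fin (2^m)) (g1 g2 : Fin n → ℝ),
      ℙ {ω | H1 ω = f1 ∧ H2 ω = f2 ∧ S1 ω = g1 ∧ S2 ω = g2}
        = ℙ {ω | H1 ω = f1} * ℙ {ω | H2 ω = f2} * ℙ {ω | S1 ω = g1} * ℙ {ω | S2 ω = g2})
    -- H1 and H2 are pairwise independent uniform families into Fin (2^m):
    (hH1unif : ∀ i u, ℙ {ω | H1 ω i = u} = 1 / (2^m : ℝ≥0∞))
    (hH1pair : ∀ i i', i ≠ i' → ∀ u v,
      ℙ {ω | H1 ω i = u ∧ H1 ω i' = v} = ℙ {ω | H1 ω i = u} * ℙ {ω | H1 ω i' = v})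
    (hH2unif : ∀ j u, ℙ {ω | H2 ω j = u} = 1 / (2^m : ℝ≥0∞))
    (hH2pair : ∀ j j', j ≠ j' → ∀ u v,
      ℙ {ω | H2 ω j = u ∧ H2 ω j' = v} = ℙ {ω | H2 ω j = u} * ℙ {ω | H2 ω j' = v})
    -- S1 and S2 are pairwise independent uniform families of random signs:
    (hS1val : ∀ ω i, S1 ω i ∈ ({-1, 1} : Set ℝ))
    (hS2val : ∀ ω j, S2 ω j ∈ ({-1, 1} : Set ℝ))
    (hS1unif : ∀ i, ∀ u ∈ ({-1, 1} : Set ℝ), ℙ {ω | S1 ω i = u} = 1 / 2)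
    (hS1pair : ∀ i i', i ≠ i' → ∀ u v : ℝ,
      ℙ {ω | S1 ω i = u ∧ S1 ω i' = v} = ℙ {ω | S1 ω i = u} * ℙ {ω | S1 ω i' = v})
    (hS2unif : ∀ j, ∀ u ∈ ({-1, 1} : Set ℝ), ℙ {ω | S2 ω j = u} = 1 / 2)
    (hS2pair : ∀ j j', j ≠ j' → ∀ u v : ℝ,
      ℙ {ω | S2 ω j = u ∧ S2 ω j' = v} = ℙ {ω | S2 ω j = u} * ℙ {ω | S2 ω j' = v})
    (i j : Fin n) :
    ProbabilityTheory.variance (fun ω => estimate C (H1 ω) (H2 ω) (S1 ω) (S2 ω) i j) ℙ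
      ≤ (∑ i' : Fin n, ∑ j' : Fin n, (C i' j')^2) / (2^m : ℝ) :=
  compressed_mm_fwht_variance_general n m C H1 H2 S1 S2 hmH1 hmH2 hmS1 hmS2 hindep hH1unif hH1pair
    hH2unif hH2pair hS1val hS2val hS1unif hS1pair hS2unif hS2pair i j
end

section
/- Let Ω be a probability space, n a positive natural number, and b = 2^m. Let H1, H2 : Ω → (Fin n → Fin b) be independent random functions, each a pairwise independent uniform family into Fin b. Then for any two distinct index pairs (i,j) ≠ (i',j') in Fin n × Fin n, the collision probability satisfies Pr[H1(i) XOR H2(j) = H1(i') XOR H2(j')] = 1/b. -/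
/-!
The hypotheses only speak about the measures of the fibres of `H1`, `H2` and of their
coordinates, but they already force all these maps to be almost everywhere measurable: a set `s`
with `μ s + μ sᶜ ≤ 1` is null measurable, and the uniform fibres of a coordinate have total mass
`1`. Hence the independence hypotheses are genuine `IndepFun` statements, and an event
`R X Y` with `X ⟂ Y` has probability `c` as soon as every section `R a Y` has probability `c`.

If `j ≠ j'`, fix `H1 = f`: the event reads `H2 j' = t (H2 j)` for a map `t` depending on `f`,
and pairwise independence and uniformity of `H2` give probability `2^(-m)`. If `j = j'`, then
`i ≠ i'`; fixing `H2 = g`, the event reads `H1 i = H1 i'`, of probability `2^(-m)` for the same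
reason.
-/

open MeasureTheory
open scoped ENNReal ProbabilityTheory

open ProbabilityTheory

section

variable {Ω α β ι : Type*} [MeasurableSpace Ω] {μ : Measure Ω}

theorem nullMeasurableSet_of_measure_add_measure_compl_le [IsFiniteMeasure μ] {s : Set Ω}
    (h : μ s + μ sᶜ ≤ μ Set.univ) : NullMeasurableSet s μ := by
  set t := toMeasurable μ s
  have ht : MeasurableSet t := measurableSet_toMeasurable μ s
  have hst : s ⊆ t := subset_toMeasurable μ s
  have hcompl : μ sᶜ = μ (t \ s) + μ tᶜ := by
    rw [← measure_inter_add_sdiff sᶜ ht, Set.inter_comm, Set.sdiff_eq (s := sᶜ),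
      Set.inter_eq_right.2 (Set.compl_subset_compl.2 hst), Set.sdiff_eq]
  have hnull : μ Set.univ + μ (t \ s) ≤ μ Set.univ + 0 :=
    calc μ Set.univ + μ (t \ s) = μ t + μ tᶜ + μ (t \ s) := by
          rw [measure_add_measure_compl ht]
      _ = μ s + μ sᶜ := by rw [hcompl, measure_toMeasurable]; ring
      _ ≤ μ Set.univ + 0 := by rwa [add_zero]
  rw [← Set.sdiff_sdiff_cancel_left hst]
  exact ht.nullMeasurableSet.diff <| .of_null <| nonpos_iff_eq_zero.1 <|
    ENNReal.le_of_add_le_add_left (measure_ne_top μ _) hnull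

theorem aemeasurable_of_sum_measure_preimage_singleton_le [IsFiniteMeasure μ] [Fintype α]
    [MeasurableSpace α] [MeasurableSingletonClass α] {X : Ω → α}
    (h : ∑ a, μ (X ⁻¹' {a}) ≤ μ Set.univ) : AEMeasurable X μ := by
  classical
  have hfiber (a : α) : NullMeasurableSet (X ⁻¹' {a}) μ := by
    refine nullMeasurableSet_of_measure_add_measure_compl_le (le_trans ?_ h)
    have hcompl : (X ⁻¹' {a})ᶜ = ⋃ b ∈ Finset.univ.erase a, X ⁻¹' {b} := by
      ext ω; simp [eq_comm]
    rw [← Finset.add_sum_erase _ _ (Finset.mem_univ a), hcompl]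
    gcongr
    exact measure_biUnion_finset_le _ _
  refine NullMeasurable.aemeasurable fun s _ => ?_
  rw [← Set.biUnion_preimage_singleton]
  exact .biUnion s.to_countable fun a _ => hfiber a

theorem indepFun_of_measure_setOf_and_eq_mul [IsFiniteMeasure μ]
    [MeasurableSpace α] [Countable α] [MeasurableSingletonClass α]
    [MeasurableSpace β] [Countable β] [MeasurableSingletonClass β] {X : Ω → α} {Y : Ω → β}
    (hX : AEMeasurable X μ) (hY : AEMeasurable Y μ)
    (h : ∀ a b, μ {ω | X ω = a ∧ Y ω = b} = μ {ω | X ω = a} * μ {ω | Y ω = b}) :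
    IndepFun X Y μ := by
  rw [indepFun_iff_map_prod_eq_prod_map_map hX hY]
  refine Measure.ext_of_singleton fun ⟨a, b⟩ => ?_
  rw [Measure.map_apply_of_aemeasurable (hX.prodMk hY) (measurableSet_singleton _),
    ← Set.singleton_prod_singleton, Measure.prod_prod,
    Measure.map_apply_of_aemeasurable hX (measurableSet_singleton _),
    Measure.map_apply_of_aemeasurable hY (measurableSet_singleton _)]
  exact h a b

theorem ProbabilityTheory.IndepFun.measure_setOf_eq_of_forall [IsProbabilityMeasure μ]
    [MeasurableSpace α] [MeasurableSpace β] {X : Ω → α} {Y : Ω → β}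
    (hXY : IndepFun X Y μ) (hX : AEMeasurable X μ) (hY : AEMeasurable Y μ)
    {R : α → β → Prop} (hR : MeasurableSet {p : α × β | R p.1 p.2}) {c : ℝ≥0∞}
    (h : ∀ a, μ {ω | R a (Y ω)} = c) : μ {ω | R (X ω) (Y ω)} = c := by
  have : IsProbabilityMeasure (μ.map X) := Measure.isProbabilityMeasure_map hX
  calc μ {ω | R (X ω) (Y ω)} = μ.map (fun ω => (X ω, Y ω)) {p | R p.1 p.2} :=
        (Measure.map_apply_of_aemeasurable (hX.prodMk hY) hR).symm
    _ = ∫⁻ a, μ.map Y (Prod.mk a ⁻¹' {p | R p.1 p.2}) ∂μ.map X := by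
        rw [(indepFun_iff_map_prod_eq_prod_map_map hX hY).1 hXY, Measure.prod_apply hR]
    _ = ∫⁻ _, c ∂μ.map X := by
        refine lintegral_congr fun a => ?_
        rw [Measure.map_apply_of_aemeasurable hY (hR.preimage measurable_prodMk_left)]
        exact h a
    _ = c := by simp

theorem aemeasurable_of_measure_preimage_singleton_eq_inv_card [IsProbabilityMeasure μ]
    [Fintype β] [MeasurableSpace β] [MeasurableSingletonClass β] {X : Ω → β}
    (h : ∀ b, μ {ω | X ω = b} = (Fintype.card β : ℝ≥0∞)⁻¹) : AEMeasurable X μ := by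
  refine aemeasurable_of_sum_measure_preimage_singleton_le ?_
  simp only [Set.preimage, Set.mem_singleton_iff, h, Finset.sum_const, Finset.card_univ,
    nsmul_eq_mul, measure_univ]
  exact ENNReal.mul_inv_le_one _

theorem measure_setOf_apply_eq_comp_apply [IsProbabilityMeasure μ]
    [Fintype β] [MeasurableSpace β] [MeasurableSingletonClass β] {H : Ω → ι → β}
    (hunif : ∀ i b, μ {ω | H ω i = b} = (Fintype.card β : ℝ≥0∞)⁻¹)
    (hpair : ∀ i i', i ≠ i' → ∀ u v,
      μ {ω | H ω i = u ∧ H ω i' = v} = μ {ω | H ω i = u} * μ {ω | H ω i' = v})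
    {i i' : ι} (hii' : i ≠ i') (t : β → β) :
    μ {ω | H ω i' = t (H ω i)} = (Fintype.card β : ℝ≥0∞)⁻¹ := by
  have hH (i : ι) : AEMeasurable (H · i) μ :=
    aemeasurable_of_measure_preimage_singleton_eq_inv_card (hunif i)
  have hind : IndepFun (H · i) (H · i') μ :=
    indepFun_of_measure_setOf_and_eq_mul (hH i) (hH i') (hpair i i' hii')
  exact hind.measure_setOf_eq_of_forall (hH i) (hH i') (R := fun a b => b = t a)
    .of_discrete fun a => hunif i' (t a)

end

theorem fxor_fxor_cancel_left {m : ℕ} (a b : Fin (2^m)) : fxor a (fxor a b) = b :=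
  Fin.ext (Nat.xor_xor_cancel_left _ _)

theorem fxor_left_inj {m : ℕ} {a b c : Fin (2^m)} : fxor a c = fxor b c ↔ a = b := by
  simp only [fxor, Fin.ext_iff, Nat.xor_left_inj]

theorem fxor_eq_fxor_iff {m : ℕ} {a b x y : Fin (2^m)} :
    fxor a x = fxor b y ↔ y = fxor b (fxor a x) := by
  constructor
  · rintro h; rw [h, fxor_fxor_cancel_left]
  · rintro rfl; rw [fxor_fxor_cancel_left]

theorem xor_hash_collision_probability_general
    {Ω : Type*} [MeasureSpace Ω] [IsProbabilityMeasure (ℙ : Measure Ω)]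
    (n m : ℕ) (H1 H2 : Ω → Fin n → Fin (2^m))
    -- H1 and H2 are independent (as function-valued random variables):
    (hindep : ∀ f g : Fin n → Fin (2^m),
      ℙ {ω | H1 ω = f ∧ H2 ω = g} = ℙ {ω | H1 ω = f} * ℙ {ω | H2 ω = g})
    -- H1 is a pairwise independent uniform family:
    (hH1unif : ∀ i u, ℙ {ω | H1 ω i = u} = 1 / (2^m : ℝ≥0∞))
    (hH1pair : ∀ i i', i ≠ i' → ∀ u v,
      ℙ {ω | H1 ω i = u ∧ H1 ω i' = v} = ℙ {ω | H1 ω i = u} * ℙ {ω | H1 ω i' = v})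
    -- H2 is a pairwise independent uniform family:
    (hH2unif : ∀ j u, ℙ {ω | H2 ω j = u} = 1 / (2^m : ℝ≥0∞))
    (hH2pair : ∀ j j', j ≠ j' → ∀ u v,
      ℙ {ω | H2 ω j = u ∧ H2 ω j' = v} = ℙ {ω | H2 ω j = u} * ℙ {ω | H2 ω j' = v})
    (i j i' j' : Fin n) (hne : (i, j) ≠ (i', j')) :
    ℙ {ω | fxor (H1 ω i) (H2 ω j) = fxor (H1 ω i') (H2 ω j')} = 1 / (2^m : ℝ≥0∞) := by
  have hcard : 1 / (2^m : ℝ≥0∞) = (Fintype.card (Fin (2^m)) : ℝ≥0∞)⁻¹ := by simp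
  rw [hcard] at hH1unif hH2unif ⊢
  have hH1 : AEMeasurable H1 ℙ := aemeasurable_pi_lambda _ fun i =>
    aemeasurable_of_measure_preimage_singleton_eq_inv_card (hH1unif i)
  have hH2 : AEMeasurable H2 ℙ := aemeasurable_pi_lambda _ fun j =>
    aemeasurable_of_measure_preimage_singleton_eq_inv_card (hH2unif j)
  have hind : IndepFun H1 H2 ℙ := indepFun_of_measure_setOf_and_eq_mul hH1 hH2 hindep
  rcases eq_or_ne j j' with rfl | hj
  · have hi : i ≠ i' := by rintro rfl; exact hne rfl
    refine hind.symm.measure_setOf_eq_of_forall hH2 hH1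
      (R := fun g f => fxor (f i) (g j) = fxor (f i') (g j)) .of_discrete fun g => ?_
    simp only [fxor_left_inj]
    exact measure_setOf_apply_eq_comp_apply hH1unif hH1pair hi.symm id
  · refine hind.measure_setOf_eq_of_forall hH1 hH2
      (R := fun f g => fxor (f i) (g j) = fxor (f i') (g j')) .of_discrete fun f => ?_
    simp only [fxor_eq_fxor_iff]
    exact measure_setOf_apply_eq_comp_apply hH2unif hH2pair hj
      (fun v => fxor (f i') (fxor (f i) v))

/-- If `H1, H2 : Ω → (Fin n → Fin b)` with `b = 2^m` are independent random
functions, each a pairwise independent uniform family into `Fin b`, then for any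
two distinct index pairs `(i,j) ≠ (i',j')`, the collision probability satisfies
`Pr[H1(i) XOR H2(j) = H1(i') XOR H2(j')] = 1/b`. -/
theorem xor_hash_collision_probability
    {Ω : Type*} [MeasureSpace Ω] [IsProbabilityMeasure (ℙ : Measure Ω)]
    (n m : ℕ) (hn : 0 < n) (H1 H2 : Ω → Fin n → Fin (2^m))
    -- H1 and H2 are independent (as function-valued random variables):
    (hindep : ∀ f g : Fin n → Fin (2^m),
      ℙ {ω | H1 ω = f ∧ H2 ω = g} = ℙ {ω | H1 ω = f} * ℙ {ω | H2 ω = g})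
    -- H1 is a pairwise independent uniform family:
    (hH1unif : ∀ i u, ℙ {ω | H1 ω i = u} = 1 / (2^m : ℝ≥0∞))
    (hH1pair : ∀ i i', i ≠ i' → ∀ u v,
      ℙ {ω | H1 ω i = u ∧ H1 ω i' = v} = ℙ {ω | H1 ω i = u} * ℙ {ω | H1 ω i' = v})
    -- H2 is a pairwise independent uniform family:
    (hH2unif : ∀ j u, ℙ {ω | H2 ω j = u} = 1 / (2^m : ℝ≥0∞))
    (hH2pair : ∀ j j', j ≠ j' → ∀ u v,
      ℙ {ω | H2 ω j = u ∧ H2 ω j' = v} = ℙ {ω | H2 ω j = u} * ℙ {ω | H2 ω j' = v})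
    (i j i' j' : Fin n) (hne : (i, j) ≠ (i', j')) :
    ℙ {ω | fxor (H1 ω i) (H2 ω j) = fxor (H1 ω i') (H2 ω j')} = 1 / (2^m : ℝ≥0∞) :=
  xor_hash_collision_probability_general n m H1 H2 hindep hH1unif hH1pair hH2unif hH2pair i j i' j'
    hne
end
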